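/- arXiv:2311.10965 — 3 statements merged into one kernel-verified Lean document; each statement's English description precedes it below -/
import Mathlib

section
/- Assume le is transitive and total. If qsp steps k l le = Some (l1, v, l2), then for every x in l2, le v x = true. -/
/-- `le` is transitive and total. -/
def le_props {X : Type} (le : X → X → Bool) : Prop :=
  (∀ a b c, le a b = true → le b c = true → le a c = true) ∧
  (∀ a b, le a b = true ∨ le b a = true)

/-- Fueled quickselect. -/
def qsp {X : Type} : Nat → Nat → List X → (X → X → Bool) → Option (List X × X × List X)
  | 0, _, _, _ => none
  | steps + 1, k, l, le =>
    match l with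
    | [] => none
    | pivot :: lst =>
      let sm := lst.filter (fun x => le x pivot && !le pivot x)
      let eq := lst.filter (fun x => le x pivot && le pivot x)
      let lg := lst.filter (fun x => !le x pivot)
      if k < sm.length then
        match qsp steps k sm le with
        | none => none
        | some (a, x, b) => some (a, x, b ++ ((pivot :: eq) ++ lg))
      else if sm.length + eq.length < k then
        match qsp steps (k - (sm.length + eq.length + 1)) lg le with
        | none => none
        | some (a, x, b) => some (a ++ (sm ++ (pivot :: eq)), x, b)
      else
        some (sm ++ eq.take (k - sm.length), pivot, eq.drop (k - sm.length) ++ lg)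

def quick_select {X : Type} (k : Nat) (l : List X) (le : X → X → Bool) :
    Option (List X × X × List X) :=
  qsp l.length k l le

/-- Data points are lists of naturals. -/
abbrev datapt : Type := List Nat

/-- k-d trees. -/
inductive kdtree : Type where
  | mt_tree : kdtree
  | node : Nat → datapt → kdtree → kdtree → kdtree

/-- Compare two data points on their `i`-th coordinate. -/
def ith_leb (i : Nat) (p q : datapt) : Bool := decide (p.getD i 0 ≤ q.getD i 0)

def median_partition (l : List datapt) (le : datapt → datapt → Bool) :
    Option (List datapt × datapt × List datapt) :=
  quick_select (l.length / 2) l le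

def next_depth (k d : Nat) : Nat := (d + 1) % k

def build_kdtree_ : Nat → Nat → List datapt → Nat → kdtree
  | 0, _, _, _ => .mt_tree
  | fuel + 1, k, data, depth_mod =>
    match data with
    | [] => .mt_tree
    | _ :: _ =>
      match median_partition data (ith_leb depth_mod) with
      | none => .mt_tree
      | some (sm, pvt, lg) =>
        .node depth_mod pvt
          (build_kdtree_ fuel k sm (next_depth k depth_mod))
          (build_kdtree_ fuel k lg (next_depth k depth_mod))

def build_kdtree (k : Nat) (data : List datapt) : kdtree :=
  build_kdtree_ data.length k data 0

/-- Bounding boxes: lower and upper bounds per coordinate (`none` = unbounded). -/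
structure bbox : Type where
  mins : List (Option Nat)
  maxs : List (Option Nat)

def list_set {A : Type} (l : List A) (d : Nat) (v : A) : List A := l.set d v

def bb_split (bb : bbox) (d : Nat) (v : Nat) : bbox × bbox :=
  (⟨bb.mins, list_set bb.maxs d (some v)⟩, ⟨list_set bb.mins d (some v), bb.maxs⟩)

/-- Coordinatewise containment of a point in a bounding box. -/
def bb_contains (bb : bbox) (pt : datapt) : Bool :=
  (List.range pt.length).all (fun i =>
    (match bb.mins.getD i none with
     | none => true
     | some s => decide (s ≤ pt.getD i 0)) &&
    (match bb.maxs.getD i none with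
     | none => true
     | some t => decide (pt.getD i 0 ≤ t)))

/-- Manhattan distance between two points (on naturals). -/
def sum_dist (q p : datapt) : Nat :=
  (List.zipWith (fun a b => (a - b) + (b - a)) q p).sum

/-- Closest enclosed point: clamp each coordinate of `vs` into the box. -/
def cep (vs : datapt) (mins maxs : List (Option Nat)) : datapt :=
  (List.range vs.length).map (fun i =>
    let v := vs.getD i 0
    let v1 := match maxs.getD i none with | none => v | some t => min v t
    match mins.getD i none with | none => v1 | some s => max s v1)

def kdtree_bounded : kdtree → bbox → Bool
  | .mt_tree, _ => true
  | .node ax pt lft rgt, bb =>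
    bb_contains bb pt &&
    kdtree_bounded lft (bb_split bb ax (pt.getD ax 0)).1 &&
    kdtree_bounded rgt (bb_split bb ax (pt.getD ax 0)).2

inductive In_kdtree : datapt → kdtree → Prop where
  | in_root : ∀ ax pt lft rgt, In_kdtree pt (.node ax pt lft rgt)
  | in_left : ∀ v ax pt lft rgt, In_kdtree v lft → In_kdtree v (.node ax pt lft rgt)
  | in_right : ∀ v ax pt lft rgt, In_kdtree v rgt → In_kdtree v (.node ax pt lft rgt)

inductive Contents_kdtree : kdtree → List datapt → Prop where
  | cmt : Contents_kdtree .mt_tree []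
  | cnode : ∀ ax pt lft rgt ll rl, Contents_kdtree lft ll → Contents_kdtree rgt rl →
      Contents_kdtree (.node ax pt lft rgt) (pt :: (ll ++ rl))

/- A (max-)priority queue of elements of `A` keyed by `key : A → Nat`,
   implemented as an unsorted list. -/
abbrev priqueue (A : Type) (_key : A → Nat) : Type := List A

def pq_empty (A : Type) (key : A → Nat) : priqueue A key := []

def pq_insert {A : Type} (key : A → Nat) (e : A) (pq : priqueue A key) : priqueue A key :=
  e :: pq

def pq_size {A : Type} {key : A → Nat} (pq : priqueue A key) : Nat := pq.length

/-- Remove (one) element of maximal key: returns it and the rest. -/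
def select_max {A : Type} (key : A → Nat) : A → List A → A × List A
  | x, [] => (x, [])
  | x, y :: ys =>
    if key y ≤ key x then
      let p := select_max key x ys
      (p.1, y :: p.2)
    else
      let p := select_max key y ys
      (p.1, x :: p.2)

def delete_max {A : Type} (key : A → Nat) : priqueue A key → Option (A × priqueue A key)
  | [] => none
  | x :: xs => some (select_max key x xs)

def peek_max {A : Type} (key : A → Nat) (pq : priqueue A key) : Option A :=
  (delete_max key pq).map Prod.fst

/-- Representation invariant (trivial for the list implementation). -/
def priq {A : Type} (key : A → Nat) (_pq : priqueue A key) : Prop := True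

/-- Abstraction relation between a priority queue and a list of its elements. -/
def PQAbs {A : Type} (key : A → Nat) (pq : priqueue A key) (l : List A) : Prop :=
  pq.Perm l

/-- Insert, but keep the queue size bounded by `K` (discarding a max element). -/
def insert_bounded {A : Type} (K : Nat) (key : A → Nat) (e : A) (pq : priqueue A key) :
    priqueue A key :=
  let updpq := pq_insert key e pq
  if K < pq_size updpq then
    match delete_max key updpq with
    | none => updpq
    | some (_, updpq') => updpq'
  else updpq

/-- K-nearest-neighbor search over a k-d tree with bounding-box pruning. -/
def knn (K k : Nat) : kdtree → bbox → datapt → priqueue datapt (fun _ => 0) → List datapt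
  | .mt_tree, _, _, pq => pq
  | .node ax pt lft rgt, bb, query, pq =>
    let prune : Bool :=
      match peek_max (sum_dist query) pq with
      | none => false
      | some top =>
        decide (K ≤ pq.length) &&
        decide (sum_dist query top < sum_dist query (cep query bb.mins bb.maxs))
    if prune then pq
    else
      let pq0 := insert_bounded K (sum_dist query) pt pq
      let bbs := bb_split bb ax (pt.getD ax 0)
      if ith_leb ax pt query then
        knn K k rgt bbs.2 query (knn K k lft bbs.1 query pq0)
      else
        knn K k lft bbs.1 query (knn K k rgt bbs.2 query pq0)

def knn_search (K k : Nat) (tree : kdtree) (query : datapt) : List datapt :=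
  knn K k tree ⟨List.replicate k none, List.replicate k none⟩ query []

/-- Every element of `l1` has key ≤ every element of `l2`. -/
def all_in_leb {A : Type} (key : A → Nat) (l1 l2 : List A) : Prop :=
  ∀ e1 ∈ l1, ∀ e2 ∈ l2, key e1 ≤ key e2

/-- Drop the first `n` elements of a list. -/
def dropn {A : Type} : Nat → List A → List A
  | 0, lst => lst
  | _ + 1, [] => []
  | n + 1, _ :: t => dropn n t

/-!
The returned `v` is the pivot of the innermost call, hence a member of every list the recursion
passed through. At that call `l2` consists of elements not strictly below the pivot, which lie
above it by totality. Every enclosing call that descended into its strictly-smaller part appends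
its own pivot, equal part and larger part; these lie above that outer pivot, which lies above `v`,
so transitivity gives the bound.
-/

section
variable {X : Type} {le : X → X → Bool}

theorem qsp_succ_cons_eq_some {n k : ℕ} {pivot v : X} {lst l1 l2 : List X}
    (h : qsp (n + 1) k (pivot :: lst) le = some (l1, v, l2)) :
    (∃ a b, qsp n k (lst.filter fun x => le x pivot && !le pivot x) le = some (a, v, b) ∧
      l2 = b ++ ((pivot :: lst.filter fun x => le x pivot && le pivot x) ++
        lst.filter fun x => !le x pivot)) ∨
    (∃ k' a, qsp n k' (lst.filter fun x => !le x pivot) le = some (a, v, l2)) ∨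
    (v = pivot ∧ ∃ j, l2 = (lst.filter fun x => le x pivot && le pivot x).drop j ++
      lst.filter fun x => !le x pivot) := by
  simp only [qsp] at h
  split_ifs at h
  · split at h
    · cases h
    · next a w b hq =>
      simp only [Option.some.injEq, Prod.mk.injEq] at h
      obtain ⟨-, rfl, rfl⟩ := h
      exact Or.inl ⟨a, b, hq, rfl⟩
  · split at h
    · cases h
    · next a w b hq =>
      simp only [Option.some.injEq, Prod.mk.injEq] at h
      obtain ⟨-, rfl, rfl⟩ := h
      exact Or.inr (Or.inl ⟨_, a, hq⟩)
  · simp only [Option.some.injEq, Prod.mk.injEq] at h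
    obtain ⟨-, rfl, rfl⟩ := h
    exact Or.inr (Or.inr ⟨rfl, _, rfl⟩)

theorem mem_of_qsp_eq_some {steps k : ℕ} {l l1 l2 : List X} {v : X}
    (h : qsp steps k l le = some (l1, v, l2)) : v ∈ l := by
  induction steps generalizing k l l1 l2 with
  | zero => simp [qsp] at h
  | succ n ih =>
    cases l with
    | nil => simp [qsp] at h
    | cons pivot lst =>
      rcases qsp_succ_cons_eq_some h with ⟨_, _, hq, -⟩ | ⟨_, _, hq⟩ | ⟨rfl, -⟩
      · exact List.mem_cons_of_mem _ (List.mem_of_mem_filter (ih hq))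
      · exact List.mem_cons_of_mem _ (List.mem_of_mem_filter (ih hq))
      · exact List.mem_cons_self

theorem le_of_mem_cons_filter_append_filter (htot : ∀ a b, le a b = true ∨ le b a = true)
    {pivot x : X} {lst : List X}
    (hx : x ∈ (pivot :: lst.filter fun y => le y pivot && le pivot y) ++
      lst.filter fun y => !le y pivot) :
    le pivot x = true := by
  simp only [List.mem_append, List.mem_cons, List.mem_filter, Bool.and_eq_true,
    Bool.not_eq_true'] at hx
  rcases hx with (rfl | ⟨-, -, hpx⟩) | ⟨-, hxp⟩
  · simpa using htot x x
  · exact hpx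
  · simpa [hxp] using htot x pivot

end

theorem qsp_all_larger {X : Type} (steps k : Nat) (l : List X) (le : X → X → Bool)
    (l1 l2 : List X) (v : X) (Hle : le_props le)
    (h : qsp steps k l le = some (l1, v, l2)) :
    ∀ x ∈ l2, le v x = true := by
  obtain ⟨htrans, htot⟩ := Hle
  induction steps generalizing k l l1 l2 v with
  | zero => simp [qsp] at h
  | succ n ih =>
    cases l with
    | nil => simp [qsp] at h
    | cons pivot lst =>
      rcases qsp_succ_cons_eq_some h with ⟨_, b, hq, rfl⟩ | ⟨_, _, hq⟩ | ⟨rfl, _, rfl⟩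
      · have hvp : le v pivot = true :=
          (Bool.and_eq_true_iff.1 (List.mem_filter.1 (mem_of_qsp_eq_some hq)).2).1
        intro x hx
        rcases List.mem_append.1 hx with hx | hx
        · exact ih _ _ _ _ _ hq x hx
        · exact htrans _ _ _ hvp (le_of_mem_cons_filter_append_filter htot hx)
      · exact ih _ _ _ _ _ hq
      · intro x hx
        apply le_of_mem_cons_filter_append_filter htot
        rcases List.mem_append.1 hx with hx | hx
        · exact List.mem_append_left _ (List.mem_cons_of_mem _ (List.mem_of_mem_drop hx))
        · exact List.mem_append_right _ hx
end

section
/- For any fuel f, dimension count k, data list, and depth index dmod, if 0 < k, dmod < k, and length data ≤ f, then there exists a list lst such that Contents_kdtree (build_kdtree_ f k data dmod) lst and data is a permutation of lst. -/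
/-!
Quickselect only rearranges its input: whenever `qsp` returns `(a, x, b)` on `l`, the list `l`
is a permutation of `a ++ x :: b`, and it does return as soon as the index is in range and the
fuel covers the list, since every recursive call is on a sublist of the tail. Both sides of a
median split are therefore strictly shorter than the data, so the fuel bound passes to the
subtrees, and by induction on the fuel the contents of the tree are a permutation of the data.
-/

theorem List.perm_filter_and_not_append_filter_and_append_filter_not {X : Type}
    (p q : X → Bool) (l : List X) :
    l.Perm (l.filter (fun x => p x && !q x) ++ l.filter (fun x => p x && q x) ++
      l.filter (fun x => !p x)) := by
  have hp := (l.filter_append_perm p).symm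
  have hq := (l.filter p).filter_append_perm (fun x => !q x)
  simp only [List.filter_filter, Bool.not_not] at hq
  refine hp.trans (List.Perm.append_right _ ?_)
  simpa only [Bool.and_comm] using hq.symm

theorem exists_qsp_eq_some_perm {X : Type} (le : X → X → Bool) (steps k : Nat) (l : List X)
    (hl : l.length ≤ steps) (hk : k < l.length) :
    ∃ a x b, qsp steps k l le = some (a, x, b) ∧ l.Perm (a ++ x :: b) := by
  classical
  induction steps generalizing k l with
  | zero => omega
  | succ steps ih =>
    rcases l with _ | ⟨pivot, lst⟩
    · simp at hk
    simp only [qsp]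
    have hp := lst.perm_filter_and_not_append_filter_and_append_filter_not (le · pivot) (le pivot)
    set sm := lst.filter (fun x => le x pivot && !le pivot x)
    set eq := lst.filter (fun x => le x pivot && le pivot x)
    set lg := lst.filter (fun x => !le x pivot)
    have hlen : lst.length = sm.length + eq.length + lg.length := by
      simpa only [List.length_append] using hp.length_eq
    simp only [List.length_cons] at hl hk
    rw [List.perm_iff_count] at hp
    by_cases h_sm : k < sm.length
    · obtain ⟨a, x, b, hq, hperm⟩ := ih k sm (by omega) h_sm
      refine ⟨a, x, b ++ ((pivot :: eq) ++ lg), by simp only [if_pos h_sm, hq], ?_⟩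
      rw [List.perm_iff_count] at hperm ⊢
      intro y
      have := hp y; have := hperm y
      simp only [List.count_cons, List.count_append] at *
      omega
    by_cases h_lg : sm.length + eq.length < k
    · obtain ⟨a, x, b, hq, hperm⟩ := ih (k - (sm.length + eq.length + 1)) lg (by omega) (by omega)
      refine ⟨a ++ (sm ++ (pivot :: eq)), x, b, by simp only [if_neg h_sm, if_pos h_lg, hq], ?_⟩
      rw [List.perm_iff_count] at hperm ⊢
      intro y
      have := hp y; have := hperm y
      simp only [List.count_cons, List.count_append] at *
      omega
    refine ⟨sm ++ eq.take (k - sm.length), pivot, eq.drop (k - sm.length) ++ lg,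
      by simp only [if_neg h_sm, if_neg h_lg], ?_⟩
    rw [List.perm_iff_count]
    intro y
    have := hp y
    have := congrArg (List.count y) (eq.take_append_drop (k - sm.length))
    simp only [List.count_cons, List.count_append] at *
    omega

theorem exists_median_partition_eq_some_perm (l : List datapt) (le : datapt → datapt → Bool) (hl : l ≠ []) :
    ∃ sm pvt lg, median_partition l le = some (sm, pvt, lg) ∧ l.Perm (sm ++ pvt :: lg) :=
  exists_qsp_eq_some_perm le _ _ l le_rfl
    (Nat.div_lt_self (List.length_pos_iff.mpr hl) one_lt_two)

theorem build_kdtree_contents_perm_gen_general (fuel k : Nat) (data : List datapt)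
    (depth_mod : Nat) (hf : data.length ≤ fuel) :
    ∃ lst, Contents_kdtree (build_kdtree_ fuel k data depth_mod) lst ∧
      data.Perm lst := by
  induction fuel generalizing data depth_mod with
  | zero =>
    rw [List.eq_nil_of_length_eq_zero (Nat.le_zero.mp hf)]
    exact ⟨[], .cmt, .nil⟩
  | succ fuel ih =>
    rcases data with _ | ⟨d, ds⟩
    · exact ⟨[], .cmt, .nil⟩
    obtain ⟨sm, pvt, lg, hsplit, hperm⟩ :=
      exists_median_partition_eq_some_perm (d :: ds) (ith_leb depth_mod) (List.cons_ne_nil _ _)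
    have hlen := hperm.length_eq
    simp only [List.length_cons, List.length_append] at hlen hf
    obtain ⟨l_sm, h_sm, hperm_sm⟩ := ih sm (next_depth k depth_mod) (by omega)
    obtain ⟨l_lg, h_lg, hperm_lg⟩ := ih lg (next_depth k depth_mod) (by omega)
    refine ⟨pvt :: (l_sm ++ l_lg), ?_, hperm.trans (List.perm_middle.trans ?_)⟩
    · simp only [build_kdtree_, hsplit]
      exact .cnode _ _ _ _ _ _ h_sm h_lg
    · exact (hperm_sm.append hperm_lg).cons pvt

theorem build_kdtree_contents_perm_gen (fuel k : Nat) (data : List datapt)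
    (depth_mod : Nat) (hk : 0 < k) (hd : depth_mod < k) (hf : data.length ≤ fuel) :
    ∃ lst, Contents_kdtree (build_kdtree_ fuel k data depth_mod) lst ∧
      data.Perm lst :=
  build_kdtree_contents_perm_gen_general fuel k data depth_mod hf
end

section
/- The KNN search result has the correct size: for K > 0, a nonempty data list of k-dimensional points with k > 0, the list result = knn_search K k (build_kdtree k data) query has length min K (length data). -/
/-!
Building a k-d tree by median partitioning stores every data point exactly once, because
quickselect splits a list of length `n` into parts of lengths summing to `n - 1` around the
pivot. The search starts with an empty queue and visits each stored point once, and each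
insertion grows the queue by one until it holds `K` points; it prunes a subtree only when the
queue is already full. Hence the queue ends with `min K n` points.
-/

def kdtree.size : kdtree → Nat
  | .mt_tree => 0
  | .node _ _ l r => l.size + r.size + 1

theorem List.length_filter_and_not_add_length_filter_and_add_length_filter_not {X : Type}
    (p q : X → Bool) (l : List X) :
    (l.filter (fun x => p x && !q x)).length + (l.filter (fun x => p x && q x)).length +
      (l.filter (fun x => !p x)).length = l.length := by
  induction l with
  | nil => rfl
  | cons a t ih =>
    simp only [List.filter_cons]
    cases p a <;> cases q a <;> simp <;> omega

theorem qsp_eq_some_of_lt {X : Type} (le : X → X → Bool) :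
    ∀ (steps k : Nat) (l : List X), l.length ≤ steps → k < l.length →
      ∃ a x b, qsp steps k l le = some (a, x, b) ∧ l.length = a.length + b.length + 1
  | 0, _, _, hsteps, hk => by omega
  | _ + 1, _, [], _, hk => by simp at hk
  | steps + 1, k, pivot :: lst, hsteps, hk => by
    have hsplit := List.length_filter_and_not_add_length_filter_and_add_length_filter_not
      (le · pivot) (le pivot ·) lst
    simp only [List.length_cons] at hsteps hk
    simp only [qsp]
    set sm := lst.filter (fun x => le x pivot && !le pivot x)
    set eq := lst.filter (fun x => le x pivot && le pivot x)
    set lg := lst.filter (fun x => !le x pivot)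
    by_cases hsm : k < sm.length
    · obtain ⟨a, x, b, hq, hl⟩ := qsp_eq_some_of_lt le steps k sm (by omega) hsm
      exact ⟨a, x, b ++ ((pivot :: eq) ++ lg), by simp [hsm, hq], by simp; omega⟩
    by_cases hlg : sm.length + eq.length < k
    · obtain ⟨a, x, b, hq, hl⟩ :=
        qsp_eq_some_of_lt le steps (k - (sm.length + eq.length + 1)) lg (by omega) (by omega)
      exact ⟨a ++ (sm ++ pivot :: eq), x, b, by simp [hsm, hlg, hq], by simp; omega⟩
    exact ⟨sm ++ eq.take (k - sm.length), pivot, eq.drop (k - sm.length) ++ lg,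
      by simp [hsm, hlg], by simp; omega⟩

theorem size_build_kdtree_ (k : Nat) :
    ∀ (fuel : Nat) (data : List datapt) (depth : Nat), data.length ≤ fuel →
      (build_kdtree_ fuel k data depth).size = data.length
  | 0, data, _, h => by simp_all [build_kdtree_, kdtree.size]
  | _ + 1, [], _, _ => rfl
  | fuel + 1, p :: rest, depth, h => by
    obtain ⟨sm, pvt, lg, hq, hl⟩ := qsp_eq_some_of_lt (ith_leb depth) _
      ((p :: rest).length / 2) (p :: rest) le_rfl (Nat.div_lt_self (by simp) (by norm_num))
    simp only [build_kdtree_, median_partition, quick_select, hq, kdtree.size]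
    rw [size_build_kdtree_ k fuel sm _ (by omega), size_build_kdtree_ k fuel lg _ (by omega)]
    omega

theorem length_select_max_snd {A : Type} (key : A → Nat) :
    ∀ (x : A) (ys : List A), (select_max key x ys).2.length = ys.length
  | _, [] => rfl
  | x, y :: ys => by
    simp only [select_max]
    split <;> simp [length_select_max_snd]

theorem length_insert_bounded {A : Type} (K : Nat) (key : A → Nat) (e : A)
    (pq : priqueue A key) (h : pq.length ≤ K) :
    (insert_bounded K key e pq).length = min K (pq.length + 1) := by
  by_cases hK : pq.length = K
  · simp [insert_bounded, pq_insert, pq_size, delete_max, hK, length_select_max_snd]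
  · simp [insert_bounded, pq_insert, pq_size, show ¬ K < pq.length + 1 by omega]; omega

theorem length_knn (K k : Nat) (t : kdtree) (bb : bbox) (q : datapt)
    (pq : priqueue datapt (fun _ => 0)) (h : pq.length ≤ K) :
    (knn K k t bb q pq).length = min K (pq.length + t.size) := by
  induction t generalizing bb pq with
  | mt_tree => simp [knn, kdtree.size]; omega
  | node ax pt lft rgt ihl ihr =>
    have hpq := length_insert_bounded K (sum_dist q) pt pq h
    have hle : (insert_bounded K (sum_dist q) pt pq).length ≤ K := hpq.trans_le (min_le_left _ _)
    simp only [knn]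
    split_ifs with hprune hleb
    · have hfull : K ≤ pq.length := by split at hprune <;> simp_all
      simp only [kdtree.size]; omega
    · rw [ihr _ _ (by rw [ihl _ _ hle]; omega), ihl _ _ hle, hpq, kdtree.size]; omega
    · rw [ihl _ _ (by rw [ihr _ _ hle]; omega), ihr _ _ hle, hpq, kdtree.size]; omega

theorem knn_search_build_size_general (K k : Nat) (data : List datapt) (query : datapt) :
    (knn_search K k (build_kdtree k data) query).length = min K data.length := by
  rw [knn_search, length_knn _ _ _ _ _ _ (Nat.zero_le K), build_kdtree,
    size_build_kdtree_ k _ _ _ le_rfl]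
  simp

theorem knn_search_build_size (K k : Nat) (data : List datapt) (query : datapt)
    (hK : 0 < K) (hdata : 0 < data.length) (hk : 0 < k)
    (hdim : ∀ v' ∈ data, v'.length = k) :
    (knn_search K k (build_kdtree k data) query).length = min K data.length :=
  knn_search_build_size_general K k data query
end
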